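/- arXiv:math/0007149 — 3 statements merged into one kernel-verified Lean document; each statement's English description precedes it below -/
import Mathlib

section
/- For all a, b, z ∈ ℂ with Re a > 0 and Re z > 0, the function w(z) = U(a,b,z) defined by the integral representation satisfies Kummer's equation z w''(z) + (b − z) w'(z) − a w(z) = 0. -/
open Set

/-- The confluent hypergeometric function `U(a,b,z)` defined by the classical
integral representation, valid for `Re a > 0` and `Re z > 0`. -/
noncomputable def U (a b z : ℂ) : ℂ :=
  (1 / Complex.Gamma a) *
    ∫ t in Set.Ioi (0 : ℝ),
      Complex.exp (-(t : ℂ) * z) * (t : ℂ) ^ (a - 1) * (1 + (t : ℂ)) ^ (b - a - 1)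

namespace KummerUProof

open MeasureTheory Filter Complex Real Set
open scoped Topology

lemma tendsto_aux (p q σ : ℝ) (hσ : 0 < σ) :
    Tendsto (fun t : ℝ => Real.exp (-(σ*t)) * t ^ p * (1+t) ^ q) atTop (𝓝 0) := by
  have h1 : Tendsto (fun t : ℝ => t ^ (p+q) * Real.exp (-σ*t)) atTop (𝓝 0) :=
    tendsto_rpow_mul_exp_neg_mul_atTop_nhds_zero (p+q) σ hσ
  have h2 : Tendsto (fun t : ℝ => (1/t+1) ^ q) atTop (𝓝 1) := by
    have h3 : Tendsto (fun t : ℝ => 1/t+1) atTop (𝓝 1) := by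
      simpa [one_div] using tendsto_inv_atTop_zero.add (tendsto_const_nhds (x := (1:ℝ)))
    simpa using h3.rpow_const (Or.inl one_ne_zero)
  have heq : (fun t : ℝ => (t ^ (p+q) * Real.exp (-σ*t)) * (1/t+1) ^ q)
      =ᶠ[atTop] fun t : ℝ => Real.exp (-(σ*t)) * t ^ p * (1+t) ^ q := by
    filter_upwards [eventually_gt_atTop 0] with t ht
    have h1t : (1:ℝ) + t = t * (1/t+1) := by field_simp
    rw [h1t, Real.mul_rpow ht.le (by positivity), Real.rpow_add ht, neg_mul]
    ring
  exact (Tendsto.congr' heq (by simpa using h1.mul h2))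

lemma cont_aux (α c σ : ℝ) :
    ContinuousOn (fun t : ℝ => Real.exp (-(σ*t)) * t ^ (α-1) * (1+t) ^ c) (Ioi 0) := by
  refine ((continuous_const.mul continuous_id').neg.rexp.continuousOn.mul
    (continuousOn_id.rpow_const fun x hx => Or.inl (ne_of_gt hx))).mul
    ((continuousOn_const.add continuousOn_id).rpow_const fun x hx => Or.inl ?_)
  have hx' : (0:ℝ) < x := hx
  exact (show (0:ℝ) < 1 + x by positivity).ne'

lemma real_integrable (α c σ : ℝ) (hα : 0 < α) (hσ : 0 < σ) :
    IntegrableOn (fun t : ℝ => Real.exp (-(σ*t)) * t ^ (α-1) * (1+t) ^ c) (Ioi 0) := by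
  rw [← Ioc_union_Ioi_eq_Ioi (zero_le_one (α := ℝ)), integrableOn_union]
  constructor
  · have hint0 : IntegrableOn (fun t : ℝ => t ^ (α-1)) (Ioc (0:ℝ) 1) := by
      rw [← intervalIntegrable_iff_integrableOn_Ioc_of_le zero_le_one]
      exact intervalIntegral.intervalIntegrable_rpow' (by linarith)
    refine Integrable.mono' (hint0.const_mul (max ((2:ℝ) ^ c) 1))
      (((cont_aux α c σ).mono Ioc_subset_Ioi_self).aestronglyMeasurable measurableSet_Ioc) ?_
    rw [ae_restrict_iff' measurableSet_Ioc]
    filter_upwards with t ht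
    have h0 : (0:ℝ) < t := ht.1
    have h1 : t ≤ 1 := ht.2
    rw [Real.norm_eq_abs, _root_.abs_of_nonneg (by positivity)]
    have e1 : Real.exp (-(σ*t)) ≤ 1 := Real.exp_le_one_iff.mpr (by nlinarith)
    have e2 : (1+t) ^ c ≤ max ((2:ℝ) ^ c) 1 := by
      rcases le_or_gt 0 c with hc | hc
      · exact le_max_of_le_left (Real.rpow_le_rpow (by positivity) (by linarith) hc)
      · exact le_max_of_le_right (Real.rpow_le_one_of_one_le_of_nonpos (by linarith) hc.le)
    calc Real.exp (-(σ*t)) * t ^ (α-1) * (1+t) ^ c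
        ≤ 1 * t ^ (α-1) * max ((2:ℝ) ^ c) 1 := by
          refine mul_le_mul (mul_le_mul_of_nonneg_right e1 (by positivity)) e2
            (by positivity) (by positivity)
      _ = max ((2:ℝ) ^ c) 1 * t ^ (α-1) := by ring
  · refine integrable_of_isBigO_exp_neg (half_pos hσ)
      ((cont_aux α c σ).mono fun x hx => show (0:ℝ) < x from lt_of_lt_of_le one_pos hx) ?_
    refine Asymptotics.IsLittleO.isBigO ?_
    refine Asymptotics.isLittleO_of_tendsto (fun x hx => absurd hx (Real.exp_ne_zero _)) ?_
    refine Tendsto.congr' ?_ (tendsto_aux (α-1) c (σ/2) (half_pos hσ))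
    filter_upwards with t
    have he : Real.exp (-(σ*t)) = Real.exp (-(σ/2*t)) * Real.exp (-(σ/2) * t) := by
      rw [← Real.exp_add]; ring_nf
    rw [eq_div_iff (Real.exp_ne_zero _), he]; ring

/-- The integrand, with an extra factor `(-t)^k`. -/
noncomputable def ff (a b z : ℂ) (k : ℕ) (t : ℝ) : ℂ :=
  (-(t:ℂ))^k * (Complex.exp (-(t:ℂ) * z) * (t:ℂ) ^ (a-1) * (1 + (t:ℂ)) ^ (b-a-1))

lemma norm_ff (a b z : ℂ) (k : ℕ) {t : ℝ} (ht : 0 < t) :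
    ‖ff a b z k t‖ = Real.exp (-(z.re * t)) * t ^ (a.re + k - 1) * (1+t) ^ (b.re - a.re - 1) := by
  have h1t : (0:ℝ) < 1 + t := by linarith
  have hb1 : ((1:ℂ) + (t:ℂ)) = ((1+t : ℝ) : ℂ) := by push_cast; ring
  have hre : (-(t:ℂ) * z).re = -(z.re * t) := by simp [mul_comm]
  rw [ff, hb1, norm_mul, norm_mul, norm_mul, norm_pow, norm_neg, Complex.norm_real, Real.norm_eq_abs,
    Complex.norm_exp, Complex.norm_cpow_eq_rpow_re_of_pos ht,
    Complex.norm_cpow_eq_rpow_re_of_pos h1t, hre, _root_.abs_of_nonneg ht.le]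
  have h2 : t ^ (a.re + (k:ℝ) - 1) = t ^ k * t ^ (a.re - 1) := by
    rw [← Real.rpow_natCast t k, ← Real.rpow_add ht]; ring_nf
  simp only [Complex.sub_re, Complex.one_re]
  rw [h2]; ring

lemma cont_ff (a b z : ℂ) (k : ℕ) : ContinuousOn (ff a b z k) (Ioi 0) := by
  refine ContinuousOn.mul ?_ (ContinuousOn.mul (ContinuousOn.mul ?_ ?_) ?_)
  · exact ((continuous_ofReal.neg).pow k).continuousOn
  · exact (Complex.continuous_exp.comp (continuous_ofReal.neg.mul continuous_const)).continuousOn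
  · refine continuousOn_of_forall_continuousAt fun x hx => ?_
    exact (continuousAt_cpow_const (Complex.ofReal_mem_slitPlane.2 hx)).comp
      Complex.continuous_ofReal.continuousAt
  · refine continuousOn_of_forall_continuousAt fun x hx => ?_
    refine (continuousAt_cpow_const ?_).comp
      (continuous_const.add Complex.continuous_ofReal).continuousAt
    refine Complex.mem_slitPlane_iff.2 (Or.inl ?_)
    have hx' : (0:ℝ) < x := hx
    simp [hx']
    positivity

lemma integrable_ff (a b z : ℂ) (k : ℕ) (ha : 0 < a.re) (hz : 0 < z.re) :
    IntegrableOn (ff a b z k) (Ioi 0) := by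
  refine Integrable.mono' (real_integrable (a.re + k) (b.re - a.re - 1) z.re (by positivity) hz)
    ((cont_ff a b z k).aestronglyMeasurable measurableSet_Ioi) ?_
  rw [ae_restrict_iff' measurableSet_Ioi]
  filter_upwards with t ht
  rw [norm_ff a b z k ht]

lemma hasDerivAt_ff (a b : ℂ) (k : ℕ) (t : ℝ) (w : ℂ) :
    HasDerivAt (fun u => ff a b u k t) (ff a b w (k+1) t) w := by
  have h1 : HasDerivAt (fun u : ℂ => Complex.exp (-(t:ℂ) * u))
      (Complex.exp (-(t:ℂ) * w) * (-(t:ℂ))) w := by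
    simpa using ((hasDerivAt_id w).const_mul (-(t:ℂ))).cexp
  have h2 := (((h1.mul_const ((t:ℂ) ^ (a-1))).mul_const ((1 + (t:ℂ)) ^ (b-a-1))).const_mul
    ((-(t:ℂ))^k))
  refine (h2 : HasDerivAt (fun u => ff a b u k t) _ w).congr_deriv ?_
  simp [ff]; ring

lemma hasDerivAt_integral (a b : ℂ) (k : ℕ) {z : ℂ} (ha : 0 < a.re) (hz : 0 < z.re) :
    HasDerivAt (fun w => ∫ t in Ioi (0:ℝ), ff a b w k t)
      (∫ t in Ioi (0:ℝ), ff a b z (k+1) t) z := by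
  have hε : (0:ℝ) < z.re / 2 := by positivity
  have key := hasDerivAt_integral_of_dominated_loc_of_deriv_le (μ := volume.restrict (Ioi 0))
    (F := fun w t => ff a b w k t) (F' := fun w t => ff a b w (k+1) t)
    (bound := fun t =>
      Real.exp (-(z.re/2 * t)) * t ^ ((a.re + (k+1)) - 1) * (1+t) ^ (b.re - a.re - 1))
    (x₀ := z) (Metric.ball_mem_nhds z hε)
    (Eventually.of_forall fun w => (cont_ff a b w k).aestronglyMeasurable measurableSet_Ioi)
    (integrable_ff a b z k ha hz)
    ((cont_ff a b z (k+1)).aestronglyMeasurable measurableSet_Ioi)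
    ?_ (real_integrable _ _ _ (by positivity) hε)
    (Eventually.of_forall fun t => fun w _ => hasDerivAt_ff a b k t w)
  · exact key.2
  · rw [ae_restrict_iff' measurableSet_Ioi]
    filter_upwards with t ht
    intro w hw
    rw [norm_ff a b w (k+1) ht]
    have hwre : z.re / 2 ≤ w.re := by
      have h1 : |w.re - z.re| ≤ ‖w - z‖ := by
        rw [← Complex.sub_re]; exact Complex.abs_re_le_norm _
      have h2 : ‖w - z‖ < z.re / 2 := by simpa [Metric.mem_ball, Complex.dist_eq] using hw
      have := abs_le.mp h1
      linarith [this.1]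
    have e1 : Real.exp (-(w.re * t)) ≤ Real.exp (-(z.re/2 * t)) := by
      apply Real.exp_le_exp.mpr
      have ht' := le_of_lt (show (0:ℝ) < t from ht)
      nlinarith
    have ht' : (0:ℝ) < t := ht
    push_cast
    refine mul_le_mul_of_nonneg_right (mul_le_mul_of_nonneg_right e1 ?_) ?_ <;> positivity

lemma key_integral (a b z : ℂ) (ha : 0 < a.re) (hz : 0 < z.re) :
    ∫ t in Ioi (0:ℝ), (z * ff a b z 2 t + (b - z) * ff a b z 1 t - a * ff a b z 0 t) = 0 := by
  have ha0 : a ≠ 0 := fun h => by rw [h] at ha; simp at ha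
  set g : ℝ → ℂ := fun t => Complex.exp (-(t:ℂ)*z) * (t:ℂ)^a * (1+(t:ℂ))^(b-a) with hgdef
  set G : ℝ → ℂ := fun t => -(z * ff a b z 2 t + (b - z) * ff a b z 1 t - a * ff a b z 0 t)
    with hGdef
  have hsim : ∀ t : ℝ, ff (a+1) (b+2) z 0 t = g t := by
    intro t
    simp only [ff, hgdef, pow_zero, one_mul]
    rw [show a + 1 - 1 = a by ring, show b + 2 - (a+1) - 1 = b - a by ring]
  have hderiv : ∀ t ∈ Ioi (0:ℝ), HasDerivAt g (G t) t := by
    intro t ht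
    have ht' : (0:ℝ) < t := ht
    have h0c : (t:ℂ) ≠ 0 := Complex.ofReal_ne_zero.mpr ht'.ne'
    have h1c : (1 + (t:ℂ)) ≠ 0 := by
      intro h
      have := congrArg Complex.re h
      simp at this; linarith
    have he : HasDerivAt (fun u : ℝ => Complex.exp (-(u:ℂ)*z))
        (-z * Complex.exp (-(t:ℂ)*z)) t := by
      have := (((hasDerivAt_id ((t:ℝ):ℂ)).neg.mul_const z).cexp).comp_ofReal
      simpa [neg_mul, mul_comm] using this
    have hp : HasDerivAt (fun u : ℝ => ((u:ℂ))^a) (a * (t:ℂ)^(a-1)) t := by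
      have := (HasDerivAt.cpow_const (c := a) (hasDerivAt_id ((t:ℝ):ℂ))
        (Complex.ofReal_mem_slitPlane.2 ht')).comp_ofReal
      simpa using this
    have hq : HasDerivAt (fun u : ℝ => (1+(u:ℂ))^(b-a)) ((b-a) * (1+(t:ℂ))^(b-a-1)) t := by
      have hbase : HasDerivAt (fun u : ℂ => 1 + u) 1 ((t:ℝ):ℂ) := by
        simpa using (hasDerivAt_id ((t:ℝ):ℂ)).const_add 1
      have := (HasDerivAt.cpow_const (c := b-a) hbase ?_).comp_ofReal
      · simpa using this
      · refine Complex.mem_slitPlane_iff.2 (Or.inl ?_)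
        simp; linarith
    have htot := (he.mul hp).mul hq
    refine (htot : HasDerivAt g _ t).congr_deriv ?_
    have hX : ((t:ℂ))^a = (t:ℂ)^(a-1) * t := by
      have h := Complex.cpow_add (x := (t:ℂ)) (a-1) 1 h0c
      rw [sub_add_cancel, Complex.cpow_one] at h
      exact h
    have hY : (1+(t:ℂ))^(b-a) = (1+(t:ℂ))^(b-a-1) * (1+(t:ℂ)) := by
      have h := Complex.cpow_add (x := 1+(t:ℂ)) (b-a-1) 1 h1c
      rw [sub_add_cancel, Complex.cpow_one] at h
      exact h
    simp only [hGdef, ff, Pi.mul_apply, hX, hY]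
    ring
  have hcont : ContinuousWithinAt g (Ici 0) 0 := by
    refine ContinuousAt.continuousWithinAt ?_
    refine (ContinuousAt.mul (ContinuousAt.mul ?_ ?_) ?_)
    · exact (Complex.continuous_exp.comp
        ((continuous_ofReal.neg).mul continuous_const)).continuousAt
    · exact (continuous_ofReal_cpow_const ha).continuousAt
    · refine (continuousAt_cpow_const ?_).comp
        (continuous_const.add continuous_ofReal).continuousAt
      refine Complex.mem_slitPlane_iff.2 (Or.inl ?_)
      simp
  have hg0 : g 0 = 0 := by
    simp [hgdef, Complex.zero_cpow ha0]
  have hGint : IntegrableOn G (Ioi 0) := by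
    refine Integrable.neg ?_
    exact (((integrable_ff a b z 2 ha hz).const_mul z).add
      ((integrable_ff a b z 1 ha hz).const_mul (b-z))).sub
      ((integrable_ff a b z 0 ha hz).const_mul a)
  have htop : Tendsto g atTop (𝓝 0) := by
    rw [tendsto_zero_iff_norm_tendsto_zero]
    refine Tendsto.congr' ?_ (tendsto_aux ((a+1).re + 0 - 1) ((b+2).re - (a+1).re - 1) z.re hz)
    filter_upwards [eventually_gt_atTop 0] with t ht
    rw [← hsim t, norm_ff _ _ _ _ ht]
    norm_num [mul_comm]
  have := integral_Ioi_of_hasDerivAt_of_tendsto hcont hderiv hGint htop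
  rw [hg0, sub_zero] at this
  have h2 : ∫ t in Ioi (0:ℝ), G t =
      -∫ t in Ioi (0:ℝ), (z * ff a b z 2 t + (b - z) * ff a b z 1 t - a * ff a b z 0 t) := by
    rw [hGdef, integral_neg]
  rw [h2] at this
  exact neg_eq_zero.mp this

end KummerUProof

/-- For all `a, b, z ∈ ℂ` with `Re a > 0` and `Re z > 0`, the function
`w(z) = U(a,b,z)` satisfies Kummer's equation `z w'' + (b − z) w' − a w = 0`. -/
theorem U_satisfies_kummer (a b z : ℂ) (ha : 0 < a.re) (hz : 0 < z.re) :
    DifferentiableAt ℂ (U a b) z ∧ DifferentiableAt ℂ (deriv (U a b)) z ∧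
      z * deriv (deriv (U a b)) z + (b - z) * deriv (U a b) z - a * U a b z = 0 := by
  classical
  open KummerUProof MeasureTheory Filter in
  set C : ℂ := 1 / Complex.Gamma a with hC
  have hU : U a b = fun w => C * ∫ t in Set.Ioi (0:ℝ), ff a b w 0 t := by
    funext w
    rw [U]
    congr 1
    refine MeasureTheory.integral_congr_ae (Filter.Eventually.of_forall fun t => ?_)
    simp [ff]
  have hmem : {w : ℂ | 0 < w.re} ∈ nhds z :=
    (isOpen_lt continuous_const Complex.continuous_re).mem_nhds hz
  have hd0 : ∀ w : ℂ, 0 < w.re →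
      HasDerivAt (U a b) (C * ∫ t in Set.Ioi (0:ℝ), ff a b w 1 t) w := by
    intro w hw
    rw [hU]
    exact (hasDerivAt_integral a b 0 ha hw).const_mul C
  have hd1_ev : deriv (U a b) =ᶠ[nhds z]
      fun w => C * ∫ t in Set.Ioi (0:ℝ), ff a b w 1 t := by
    filter_upwards [hmem] with w hw
    exact (hd0 w hw).deriv
  have hd2 : HasDerivAt (fun w => C * ∫ t in Set.Ioi (0:ℝ), ff a b w 1 t)
      (C * ∫ t in Set.Ioi (0:ℝ), ff a b z 2 t) z :=
    (hasDerivAt_integral a b 1 ha hz).const_mul C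
  refine ⟨(hd0 z hz).differentiableAt, ?_, ?_⟩
  · exact (Filter.EventuallyEq.differentiableAt_iff hd1_ev).mpr hd2.differentiableAt
  · have e1 : deriv (U a b) z = C * ∫ t in Set.Ioi (0:ℝ), ff a b z 1 t := (hd0 z hz).deriv
    have e2 : deriv (deriv (U a b)) z = C * ∫ t in Set.Ioi (0:ℝ), ff a b z 2 t := by
      rw [hd1_ev.deriv_eq]
      exact hd2.deriv
    have e0 : U a b z = C * ∫ t in Set.Ioi (0:ℝ), ff a b z 0 t := by rw [hU]
    rw [e0, e1, e2]
    have hcomb : z * (∫ t in Set.Ioi (0:ℝ), ff a b z 2 t)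
        + (b - z) * (∫ t in Set.Ioi (0:ℝ), ff a b z 1 t)
        - a * (∫ t in Set.Ioi (0:ℝ), ff a b z 0 t)
        = ∫ t in Set.Ioi (0:ℝ),
            (z * ff a b z 2 t + (b - z) * ff a b z 1 t - a * ff a b z 0 t) := by
      have i2 : Integrable (fun t : ℝ => z * ff a b z 2 t) (volume.restrict (Ioi 0)) :=
        (integrable_ff a b z 2 ha hz).const_mul z
      have i1 : Integrable (fun t : ℝ => (b - z) * ff a b z 1 t) (volume.restrict (Ioi 0)) :=
        (integrable_ff a b z 1 ha hz).const_mul (b - z)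
      have i0 : Integrable (fun t : ℝ => a * ff a b z 0 t) (volume.restrict (Ioi 0)) :=
        (integrable_ff a b z 0 ha hz).const_mul a
      have i12 : Integrable
          (fun t : ℝ => z * ff a b z 2 t + (b - z) * ff a b z 1 t)
          (volume.restrict (Ioi 0)) := i2.add i1
      rw [MeasureTheory.integral_sub i12 i0, MeasureTheory.integral_add i2 i1,
        MeasureTheory.integral_const_mul, MeasureTheory.integral_const_mul,
        MeasureTheory.integral_const_mul]
    have : z * (C * ∫ t in Set.Ioi (0:ℝ), ff a b z 2 t)
        + (b - z) * (C * ∫ t in Set.Ioi (0:ℝ), ff a b z 1 t)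
        - a * (C * ∫ t in Set.Ioi (0:ℝ), ff a b z 0 t)
        = C * (z * (∫ t in Set.Ioi (0:ℝ), ff a b z 2 t)
          + (b - z) * (∫ t in Set.Ioi (0:ℝ), ff a b z 1 t)
          - a * (∫ t in Set.Ioi (0:ℝ), ff a b z 0 t)) := by ring
    rw [this, hcomb, key_integral a b z ha hz, mul_zero]
end

section
/- For all a, b, z ∈ ℂ with Re a > 0 and Re z > 0, one has U(a,b,z) = z^{−a} (1/Γ(a)) ∫₀^∞ e^{−s} s^{a−1} (1 + s/z)^{b−a−1} ds, where z^{−a} and (1+s/z)^{b−a−1} are taken with the principal branch. -/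
namespace UAux
open Set MeasureTheory Filter Real

lemma rpow_le_rpow_abs {x B u : ℝ} (hx : 1 ≤ x) (hB : x ≤ B) : x ^ u ≤ B ^ |u| := by
  have hB1 : (1:ℝ) ≤ B := hx.trans hB
  rcases le_total 0 u with hu | hu
  · calc x ^ u ≤ B ^ u := Real.rpow_le_rpow (by linarith) hB hu
      _ ≤ B ^ |u| := Real.rpow_le_rpow_of_exponent_le hB1 (le_abs_self u)
  · calc x ^ u ≤ 1 := Real.rpow_le_one_of_one_le_of_nonpos hx hu
      _ ≤ B ^ |u| := Real.one_le_rpow hB1 (abs_nonneg u)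

lemma one_add_rpow_le {t : ℝ} (q : ℝ) (ht : 0 ≤ t) :
    (1 + t) ^ q ≤ 2 ^ |q| * (1 + t ^ |q|) := by
  have h1 : (1:ℝ) ≤ 1 + t := by linarith
  have h2 : (1 + t) ^ q ≤ (1 + t) ^ |q| :=
    Real.rpow_le_rpow_of_exponent_le h1 (le_abs_self q)
  refine h2.trans ?_
  rcases le_total t 1 with h | h
  · calc (1 + t) ^ |q| ≤ 2 ^ |q| := Real.rpow_le_rpow (by linarith) (by linarith) (abs_nonneg q)
      _ ≤ 2 ^ |q| * (1 + t ^ |q|) := by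
        nlinarith [Real.rpow_nonneg ht |q|, Real.rpow_nonneg (by norm_num : (0:ℝ) ≤ 2) |q|]
  · calc (1 + t) ^ |q| ≤ (2 * t) ^ |q| := Real.rpow_le_rpow (by linarith) (by linarith) (abs_nonneg q)
      _ = 2 ^ |q| * t ^ |q| := Real.mul_rpow (by norm_num) ht
      _ ≤ 2 ^ |q| * (1 + t ^ |q|) := by
        nlinarith [Real.rpow_nonneg (by norm_num : (0:ℝ) ≤ 2) |q|, Real.rpow_nonneg ht |q|]

lemma keyInt {p r : ℝ} (q : ℝ) (hp : 0 < p) (hr : 0 < r) :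
    IntegrableOn (fun t : ℝ => t ^ (p - 1) * Real.exp (-r * t) * (1 + t) ^ q) (Ioi 0) := by
  have hmeas : AEStronglyMeasurable
      (fun t : ℝ => t ^ (p - 1) * Real.exp (-r * t) * (1 + t) ^ q)
      (volume.restrict (Ioi 0)) := by
    refine ContinuousOn.aestronglyMeasurable ?_ measurableSet_Ioi
    refine ContinuousOn.mul (ContinuousOn.mul ?_ ?_) ?_
    · exact continuousOn_id.rpow_const fun t ht => Or.inl (ne_of_gt ht)
    · exact (Real.continuous_exp.comp (continuous_const.mul continuous_id)).continuousOn
    · exact ((continuous_const.add continuous_id).continuousOn).rpow_const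
        fun t (ht : 0 < t) => Or.inl (show (1:ℝ) + t ≠ 0 from ne_of_gt (by linarith))
  have hInt : IntegrableOn
      (fun t : ℝ => 2 ^ |q| * (t ^ (p - 1) * Real.exp (-r * t))
        + 2 ^ |q| * (t ^ (p + |q| - 1) * Real.exp (-r * t))) (Ioi 0) := by
    have h1 : IntegrableOn (fun t : ℝ => t ^ (p - 1) * Real.exp (-r * t)) (Ioi 0) := by
      have := integrableOn_rpow_mul_exp_neg_mul_rpow (p := 1) (s := p - 1) (b := r)
        (by linarith) one_pos hr
      simpa using this
    have h2 : IntegrableOn (fun t : ℝ => t ^ (p + |q| - 1) * Real.exp (-r * t)) (Ioi 0) := by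
      have := integrableOn_rpow_mul_exp_neg_mul_rpow (p := 1) (s := p + |q| - 1) (b := r)
        (by have := abs_nonneg q; linarith) one_pos hr
      simpa using this
    exact (h1.const_mul _).add (h2.const_mul _)
  refine hInt.mono' hmeas ?_
  filter_upwards [ae_restrict_mem measurableSet_Ioi] with t ht
  have ht0 : 0 < t := ht
  have hnn : 0 ≤ t ^ (p - 1) * Real.exp (-r * t) * (1 + t) ^ q := by positivity
  rw [Real.norm_of_nonneg hnn]
  have key : (1 + t) ^ q ≤ 2 ^ |q| * (1 + t ^ |q|) := one_add_rpow_le q ht0.le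
  have hpos : 0 ≤ t ^ (p - 1) * Real.exp (-r * t) := by positivity
  calc t ^ (p - 1) * Real.exp (-r * t) * (1 + t) ^ q
      ≤ t ^ (p - 1) * Real.exp (-r * t) * (2 ^ |q| * (1 + t ^ |q|)) :=
        mul_le_mul_of_nonneg_left key hpos
    _ = 2 ^ |q| * (t ^ (p - 1) * Real.exp (-r * t))
        + 2 ^ |q| * (t ^ (p - 1) * t ^ |q| * Real.exp (-r * t)) := by ring
    _ = 2 ^ |q| * (t ^ (p - 1) * Real.exp (-r * t))
        + 2 ^ |q| * (t ^ (p + |q| - 1) * Real.exp (-r * t)) := by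
        rw [← Real.rpow_add ht0]; ring_nf
  done

lemma masterInt {p r C q : ℝ} (hp : 0 < p) (hr : 0 < r) {f : ℝ → ℂ}
    (hf : AEStronglyMeasurable f (volume.restrict (Ioi 0)))
    (hb : ∀ t ∈ Ioi (0:ℝ), ‖f t‖ ≤ C * (t ^ (p - 1) * Real.exp (-r * t) * (1 + t) ^ q)) :
    IntegrableOn f (Ioi 0) := by
  refine ((keyInt q hp hr).const_mul C).mono' hf ?_
  filter_upwards [ae_restrict_mem measurableSet_Ioi] with t ht
  exact hb t ht

lemma norm_cpow_le {w : ℂ} (u : ℂ) (hw : w ≠ 0) :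
    ‖w ^ u‖ ≤ ‖w‖ ^ u.re * Real.exp (Real.pi * |u.im|) := by
  rw [Complex.norm_cpow_of_ne_zero hw]
  rw [div_eq_mul_inv, ← Real.exp_neg]
  refine mul_le_mul_of_nonneg_left (Real.exp_le_exp.2 ?_) (Real.rpow_nonneg (norm_nonneg w) _)
  have h1 : |w.arg * u.im| ≤ Real.pi * |u.im| := by
    rw [abs_mul]
    exact mul_le_mul_of_nonneg_right (Complex.abs_arg_le_pi w) (abs_nonneg _)
  have := neg_abs_le (w.arg * u.im)
  linarith [neg_abs_le (w.arg * u.im), abs_nonneg (w.arg * u.im)]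

end UAux

namespace UAux2
open Set MeasureTheory Filter Real

lemma re_le_one_add {z : ℂ} (hz : 0 < z.re) {s : ℝ} (hs : 0 ≤ s) :
    1 ≤ (1 + (s:ℂ) * z⁻¹).re := by
  have h1 : ((s:ℂ) * z⁻¹).re = s * (z.re / Complex.normSq z) := by
    rw [Complex.re_ofReal_mul, Complex.inv_re]
  have hz0 : z ≠ 0 := fun h => by simp [h] at hz
  have hnsq : 0 < Complex.normSq z := Complex.normSq_pos.2 hz0
  have h2 : 0 ≤ s * (z.re / Complex.normSq z) := by positivity
  simp only [Complex.add_re, Complex.one_re, h1]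
  linarith

lemma slit_one_add {z : ℂ} (hz : 0 < z.re) {s : ℝ} (hs : 0 ≤ s) :
    (1 + (s:ℂ) * z⁻¹) ∈ Complex.slitPlane :=
  Complex.mem_slitPlane_iff.2 (Or.inl (by linarith [re_le_one_add hz hs]))

lemma one_le_abs_one_add {z : ℂ} (hz : 0 < z.re) {s : ℝ} (hs : 0 ≤ s) :
    1 ≤ ‖(1 + (s:ℂ) * z⁻¹)‖ :=
  (re_le_one_add hz hs).trans (Complex.re_le_norm _)

lemma ne_zero_one_add {z : ℂ} (hz : 0 < z.re) {s : ℝ} (hs : 0 ≤ s) :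
    (1 + (s:ℂ) * z⁻¹) ≠ 0 := by
  intro h
  have := one_le_abs_one_add hz hs
  rw [h] at this; norm_num at this

lemma measF (w c z : ℂ) : AEStronglyMeasurable
    (fun t : ℝ => Complex.exp (-(t:ℂ) * z) * (t:ℂ) ^ w * (1 + (t:ℂ)) ^ c)
    (volume.restrict (Ioi 0)) := by
  refine ContinuousOn.aestronglyMeasurable ?_ measurableSet_Ioi
  refine ContinuousOn.mul (ContinuousOn.mul ?_ ?_) ?_
  · exact (Complex.continuous_exp.comp
      ((Complex.continuous_ofReal.neg).mul continuous_const)).continuousOn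
  · exact Complex.continuous_ofReal.continuousOn.cpow_const
      fun t ht => Complex.ofReal_mem_slitPlane.2 ht
  · exact (continuous_const.add Complex.continuous_ofReal).continuousOn.cpow_const
      fun t (ht : 0 < t) => Complex.mem_slitPlane_iff.2 (Or.inl (by simp; linarith))

lemma measF' (w c z : ℂ) : AEStronglyMeasurable
    (fun t : ℝ => Complex.exp (-(t:ℂ) * z) * (-(t:ℂ)) * (t:ℂ) ^ w * (1 + (t:ℂ)) ^ c)
    (volume.restrict (Ioi 0)) := by
  refine ContinuousOn.aestronglyMeasurable ?_ measurableSet_Ioi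
  refine ContinuousOn.mul (ContinuousOn.mul (ContinuousOn.mul ?_ ?_) ?_) ?_
  · exact (Complex.continuous_exp.comp
      ((Complex.continuous_ofReal.neg).mul continuous_const)).continuousOn
  · exact Complex.continuous_ofReal.neg.continuousOn
  · exact Complex.continuous_ofReal.continuousOn.cpow_const
      fun t ht => Complex.ofReal_mem_slitPlane.2 ht
  · exact (continuous_const.add Complex.continuous_ofReal).continuousOn.cpow_const
      fun t (ht : 0 < t) => Complex.mem_slitPlane_iff.2 (Or.inl (by simp; linarith))

lemma measG (w c z : ℂ) (hz : 0 < z.re) : AEStronglyMeasurable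
    (fun s : ℝ => Complex.exp (-(s:ℂ)) * (s:ℂ) ^ w * (1 + (s:ℂ) * z⁻¹) ^ c)
    (volume.restrict (Ioi 0)) := by
  refine ContinuousOn.aestronglyMeasurable ?_ measurableSet_Ioi
  refine ContinuousOn.mul (ContinuousOn.mul ?_ ?_) ?_
  · exact (Complex.continuous_exp.comp (Complex.continuous_ofReal.neg)).continuousOn
  · exact Complex.continuous_ofReal.continuousOn.cpow_const
      fun t ht => Complex.ofReal_mem_slitPlane.2 ht
  · exact (continuous_const.add (Complex.continuous_ofReal.mul
      continuous_const)).continuousOn.cpow_const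
      fun s (hs : 0 < s) => slit_one_add hz hs.le

lemma measG' (w c u : ℂ) (z : ℂ) (hz : 0 < z.re) : AEStronglyMeasurable
    (fun s : ℝ => Complex.exp (-(s:ℂ)) * (s:ℂ) ^ w *
      (c * (1 + (s:ℂ) * z⁻¹) ^ u * ((s:ℂ) * -(z ^ 2)⁻¹)))
    (volume.restrict (Ioi 0)) := by
  refine ContinuousOn.aestronglyMeasurable ?_ measurableSet_Ioi
  refine ContinuousOn.mul (ContinuousOn.mul ?_ ?_) (ContinuousOn.mul (ContinuousOn.mul ?_ ?_) ?_)
  · exact (Complex.continuous_exp.comp (Complex.continuous_ofReal.neg)).continuousOn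
  · exact Complex.continuous_ofReal.continuousOn.cpow_const
      fun t ht => Complex.ofReal_mem_slitPlane.2 ht
  · exact continuousOn_const
  · exact (continuous_const.add (Complex.continuous_ofReal.mul
      continuous_const)).continuousOn.cpow_const
      fun s (hs : 0 < s) => slit_one_add hz hs.le
  · exact (Complex.continuous_ofReal.mul continuous_const).continuousOn

lemma normFi {t : ℝ} (ht : 0 < t) (w c z : ℂ) :
    ‖Complex.exp (-(t:ℂ) * z) * (t:ℂ) ^ w * (1 + (t:ℂ)) ^ c‖
      = Real.exp (-(t * z.re)) * t ^ w.re * (1 + t) ^ c.re := by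
  rw [norm_mul, norm_mul,
    Complex.norm_exp, Complex.norm_cpow_eq_rpow_re_of_pos ht]
  have h1 : (1 + (t:ℂ)) = ((1 + t : ℝ) : ℂ) := by push_cast; ring
  rw [h1, Complex.norm_cpow_eq_rpow_re_of_pos (by linarith)]
  congr 2
  simp [Complex.neg_re, Complex.re_ofReal_mul]

lemma normW {z : ℂ} (hz : 0 < z.re) {δ : ℝ} (hδ : 0 < δ) (hzδ : δ ≤ ‖z‖)
    {s : ℝ} (hs : 0 ≤ s) (u : ℂ) :
    ‖(1 + (s:ℂ) * z⁻¹) ^ u‖ ≤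
      ((1 + δ⁻¹) ^ |u.re| * Real.exp (Real.pi * |u.im|)) * (1 + s) ^ |u.re| := by
  set w := 1 + (s:ℂ) * z⁻¹ with hw
  have habs1 : 1 ≤ ‖w‖ := one_le_abs_one_add hz hs
  have hzabs : 0 < ‖z‖ := lt_of_lt_of_le hδ hzδ
  have hub : ‖w‖ ≤ (1 + δ⁻¹) * (1 + s) := by
    have h1 : ‖w‖ ≤ 1 + ‖(s:ℂ) * z⁻¹‖ := by
      calc ‖w‖ ≤ ‖(1:ℂ)‖ + ‖(s:ℂ) * z⁻¹‖ := norm_add_le _ _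
        _ = 1 + ‖(s:ℂ) * z⁻¹‖ := by simp
    have h2 : ‖(s:ℂ) * z⁻¹‖ = s * (‖z‖)⁻¹ := by
      rw [norm_mul, norm_inv, Complex.norm_real, Real.norm_eq_abs, abs_of_nonneg hs]
    have h3 : (‖z‖)⁻¹ ≤ δ⁻¹ := by
      apply inv_anti₀ hδ hzδ
    have h4 : s * (‖z‖)⁻¹ ≤ s * δ⁻¹ := mul_le_mul_of_nonneg_left h3 hs
    have h5 : 0 ≤ δ⁻¹ := by positivity
    nlinarith
  have hne : w ≠ 0 := ne_zero_one_add hz hs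
  calc ‖w ^ u‖ ≤ ‖w‖ ^ u.re * Real.exp (Real.pi * |u.im|) :=
        UAux.norm_cpow_le u hne
    _ ≤ ((1 + δ⁻¹) * (1 + s)) ^ |u.re| * Real.exp (Real.pi * |u.im|) := by
        exact mul_le_mul_of_nonneg_right (UAux.rpow_le_rpow_abs habs1 hub) (Real.exp_nonneg _)
    _ = ((1 + δ⁻¹) ^ |u.re| * Real.exp (Real.pi * |u.im|)) * (1 + s) ^ |u.re| := by
        rw [Real.mul_rpow (by positivity) (by positivity)]; ring

lemma F_integrable (a c z : ℂ) (ha : 0 < a.re) (hz : 0 < z.re) :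
    IntegrableOn (fun t : ℝ => Complex.exp (-(t:ℂ) * z) * (t:ℂ) ^ (a - 1) * (1 + (t:ℂ)) ^ c)
      (Ioi 0) := by
  refine UAux.masterInt (p := a.re) (r := z.re) (C := 1) (q := c.re) ha hz (measF _ _ z) ?_
  intro t ht
  have ht0 : (0:ℝ) < t := ht
  rw [normFi ht0]
  have : (a - 1).re = a.re - 1 := by simp
  rw [this, one_mul]
  apply le_of_eq
  rw [show -(t * z.re) = -z.re * t by ring]; ring

lemma G_integrable (a c z : ℂ) (ha : 0 < a.re) (hz : 0 < z.re) :
    IntegrableOn (fun s : ℝ => Complex.exp (-(s:ℂ)) * (s:ℂ) ^ (a - 1) * (1 + (s:ℂ) * z⁻¹) ^ c)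
      (Ioi 0) := by
  refine UAux.masterInt (p := a.re) (r := 1)
    (C := (1 + z.re⁻¹) ^ |c.re| * Real.exp (Real.pi * |c.im|)) (q := |c.re|)
    ha one_pos (measG _ _ z hz) ?_
  intro s hs
  have hs0 : (0:ℝ) < s := hs
  rw [norm_mul, norm_mul, Complex.norm_exp,
    Complex.norm_cpow_eq_rpow_re_of_pos hs0]
  have h1 : (-(s:ℂ)).re = -s := by simp
  rw [h1]
  have h2 : ‖(1 + (s:ℂ) * z⁻¹) ^ c‖ ≤
      ((1 + z.re⁻¹) ^ |c.re| * Real.exp (Real.pi * |c.im|)) * (1 + s) ^ |c.re| :=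
    normW hz hz (Complex.re_le_norm z) hs0.le c
  have h3 : (a - 1).re = a.re - 1 := by simp
  rw [h3]
  calc Real.exp (-s) * s ^ (a.re - 1) * ‖(1 + (s:ℂ) * z⁻¹) ^ c‖
      ≤ Real.exp (-s) * s ^ (a.re - 1) *
        (((1 + z.re⁻¹) ^ |c.re| * Real.exp (Real.pi * |c.im|)) * (1 + s) ^ |c.re|) := by
        apply mul_le_mul_of_nonneg_left h2 (by positivity)
    _ = (1 + z.re⁻¹) ^ |c.re| * Real.exp (Real.pi * |c.im|) *
        (s ^ (a.re - 1) * Real.exp (-1 * s) * (1 + s) ^ |c.re|) := by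
        rw [show -1 * s = -s by ring]; ring

end UAux2

namespace UAux3
open Set MeasureTheory Filter Real
open UAux UAux2

lemma ball_re {z₀ z : ℂ} (hz₀ : 0 < z₀.re) (hz : z ∈ Metric.ball z₀ (z₀.re / 2)) :
    z₀.re / 2 < z.re := by
  have h1 : ‖z - z₀‖ < z₀.re / 2 := by
    simpa [Complex.dist_eq] using hz
  have h2 : |(z - z₀).re| ≤ ‖z - z₀‖ := Complex.abs_re_le_norm _
  have h3 : (z - z₀).re = z.re - z₀.re := by simp
  rw [h3] at h2
  have := abs_lt.1 (h2.trans_lt h1)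
  linarith [this.1]

lemma Fdiff (a c : ℂ) (ha : 0 < a.re) :
    DifferentiableOn ℂ
      (fun z => ∫ t in Ioi (0:ℝ),
        Complex.exp (-(t:ℂ) * z) * (t:ℂ) ^ (a - 1) * (1 + (t:ℂ)) ^ c)
      {z : ℂ | 0 < z.re} := by
  intro z₀ hz₀
  have hz₀' : 0 < z₀.re := hz₀
  set δ : ℝ := z₀.re / 2 with hδdef
  have hδ : 0 < δ := by positivity
  have key := hasDerivAt_integral_of_dominated_loc_of_deriv_le (μ := volume.restrict (Ioi 0))
    (F := fun z t => Complex.exp (-(t:ℂ) * z) * (t:ℂ) ^ (a - 1) * (1 + (t:ℂ)) ^ c)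
    (F' := fun z t => Complex.exp (-(t:ℂ) * z) * (-(t:ℂ)) * (t:ℂ) ^ (a - 1) * (1 + (t:ℂ)) ^ c)
    (x₀ := z₀) (s := Metric.ball z₀ δ)
    (bound := fun t => t ^ (a.re + 1 - 1) * Real.exp (-δ * t) * (1 + t) ^ c.re)
    (Metric.ball_mem_nhds z₀ hδ)
    (Eventually.of_forall fun z => measF (a - 1) c z)
    (F_integrable a c z₀ ha hz₀')
    (measF' (a - 1) c z₀)
    ?_ ?_ ?_
  · exact key.2.differentiableAt.differentiableWithinAt
  · -- bound
    filter_upwards [ae_restrict_mem measurableSet_Ioi] with t ht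
    intro z hzb
    have ht0 : (0:ℝ) < t := ht
    have hzre : δ < z.re := ball_re hz₀' hzb
    have hnorm : ‖Complex.exp (-(t:ℂ) * z) * (-(t:ℂ)) * (t:ℂ) ^ (a - 1) * (1 + (t:ℂ)) ^ c‖
        = Real.exp (-(t * z.re)) * t * t ^ (a.re - 1) * (1 + t) ^ c.re := by
      rw [show Complex.exp (-(t:ℂ) * z) * (-(t:ℂ)) * ((t:ℂ) ^ (a - 1)) * ((1 + (t:ℂ)) ^ c)
          = (-(t:ℂ)) * (Complex.exp (-(t:ℂ) * z) * (t:ℂ) ^ (a - 1) * (1 + (t:ℂ)) ^ c) by ring]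
      rw [norm_mul, normFi ht0 (a - 1) c z]
      have hnt : ‖-(t:ℂ)‖ = t := by
        rw [norm_neg, Complex.norm_real, Real.norm_eq_abs, abs_of_pos ht0]
      rw [hnt, show (a - 1).re = a.re - 1 by simp]
      ring
    rw [hnorm]
    have h1 : Real.exp (-(t * z.re)) ≤ Real.exp (-δ * t) := by
      apply Real.exp_le_exp.2; nlinarith
    have h2 : Real.exp (-(t * z.re)) * t * t ^ (a.re - 1) ≤
        Real.exp (-δ * t) * t ^ (a.re + 1 - 1) := by
      have ht' : t * t ^ (a.re - 1) = t ^ (a.re + 1 - 1) := by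
        rw [show a.re + 1 - 1 = 1 + (a.re - 1) by ring, Real.rpow_add ht0, Real.rpow_one]
      rw [mul_assoc, ht']
      exact mul_le_mul_of_nonneg_right h1 (by positivity)
    calc Real.exp (-(t * z.re)) * t * t ^ (a.re - 1) * (1 + t) ^ c.re
        ≤ Real.exp (-δ * t) * t ^ (a.re + 1 - 1) * (1 + t) ^ c.re := by
          exact mul_le_mul_of_nonneg_right h2 (by positivity)
      _ = t ^ (a.re + 1 - 1) * Real.exp (-δ * t) * (1 + t) ^ c.re := by ring
  · -- bound integrable
    exact keyInt c.re (by linarith) hδ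
  · -- h_diff
    filter_upwards with t
    intro z hzb
    have h1 : HasDerivAt (fun z : ℂ => -(t:ℂ) * z) (-(t:ℂ)) z := by
      simpa using (hasDerivAt_id z).const_mul (-(t:ℂ))
    have h2 := h1.cexp
    exact (h2.mul_const ((t:ℂ) ^ (a - 1))).mul_const ((1 + (t:ℂ)) ^ c)

lemma Gdiff (a c : ℂ) (ha : 0 < a.re) :
    DifferentiableOn ℂ
      (fun z => ∫ s in Ioi (0:ℝ),
        Complex.exp (-(s:ℂ)) * (s:ℂ) ^ (a - 1) * (1 + (s:ℂ) * z⁻¹) ^ c)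
      {z : ℂ | 0 < z.re} := by
  intro z₀ hz₀
  have hz₀' : 0 < z₀.re := hz₀
  set δ : ℝ := z₀.re / 2 with hδdef
  have hδ : 0 < δ := by positivity
  set m : ℝ := |(c - 1).re| with hm
  set C : ℝ := ‖c‖ * ((1 + δ⁻¹) ^ m * Real.exp (Real.pi * |c.im|)) * δ⁻¹ ^ 2 with hC
  have key := hasDerivAt_integral_of_dominated_loc_of_deriv_le (μ := volume.restrict (Ioi 0))
    (F := fun z s => Complex.exp (-(s:ℂ)) * (s:ℂ) ^ (a - 1) * (1 + (s:ℂ) * z⁻¹) ^ c)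
    (F' := fun z s => Complex.exp (-(s:ℂ)) * (s:ℂ) ^ (a - 1) *
      (c * (1 + (s:ℂ) * z⁻¹) ^ (c - 1) * ((s:ℂ) * -(z ^ 2)⁻¹)))
    (x₀ := z₀) (s := Metric.ball z₀ δ)
    (bound := fun s => C * (s ^ (a.re + 1 - 1) * Real.exp (-1 * s) * (1 + s) ^ m))
    (Metric.ball_mem_nhds z₀ hδ)
    ?_
    (G_integrable a c z₀ ha hz₀')
    (measG' (a - 1) c (c - 1) z₀ hz₀')
    ?_ ?_ ?_
  · exact key.2.differentiableAt.differentiableWithinAt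
  · -- measurability of F z for z near z₀
    filter_upwards [(isOpen_lt continuous_const Complex.continuous_re).mem_nhds hz₀'] with z hzr
    exact measG (a - 1) c z hzr
  · -- bound
    filter_upwards [ae_restrict_mem measurableSet_Ioi] with s hs
    intro z hzb
    have hs0 : (0:ℝ) < s := hs
    have hzre : δ < z.re := ball_re hz₀' hzb
    have hzabs : δ ≤ ‖z‖ := le_trans hzre.le (Complex.re_le_norm z)
    have hzpos : 0 < z.re := lt_trans hδ hzre
    rw [norm_mul, norm_mul, norm_mul, norm_mul,
      Complex.norm_exp]
    have h0 : (-(s:ℂ)).re = -s := by simp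
    rw [h0, Complex.norm_cpow_eq_rpow_re_of_pos hs0]
    have hW : ‖(1 + (s:ℂ) * z⁻¹) ^ (c - 1)‖ ≤
        ((1 + δ⁻¹) ^ m * Real.exp (Real.pi * |(c-1).im|)) * (1 + s) ^ m :=
      normW hzpos hδ hzabs hs0.le (c - 1)
    have him : (c - 1).im = c.im := by simp
    rw [him] at hW
    have hlast : ‖(s:ℂ) * -(z ^ 2)⁻¹‖ ≤ s * δ⁻¹ ^ 2 := by
      rw [norm_mul, norm_neg, norm_inv, norm_pow,
        Complex.norm_real, Real.norm_eq_abs, abs_of_pos hs0]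
      have : (‖z‖ ^ 2)⁻¹ ≤ δ⁻¹ ^ 2 := by
        rw [← inv_pow]
        apply pow_le_pow_left₀ (by positivity) (inv_anti₀ hδ hzabs)
      exact mul_le_mul_of_nonneg_left this hs0.le
    have h4 : (a - 1).re = a.re - 1 := by simp
    rw [h4]
    calc Real.exp (-s) * s ^ (a.re - 1) * (‖c‖ * ‖(1 + (s:ℂ) * z⁻¹) ^ (c - 1)‖ *
          ‖(s:ℂ) * -(z ^ 2)⁻¹‖)
        ≤ Real.exp (-s) * s ^ (a.re - 1) * (‖c‖ *
          (((1 + δ⁻¹) ^ m * Real.exp (Real.pi * |c.im|)) * (1 + s) ^ m) * (s * δ⁻¹ ^ 2)) := by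
          apply mul_le_mul_of_nonneg_left ?_ (by positivity)
          apply mul_le_mul ?_ hlast (norm_nonneg _) (by positivity)
          exact mul_le_mul_of_nonneg_left hW (norm_nonneg c)
      _ = C * (s ^ (a.re - 1) * s * Real.exp (-1 * s) * (1 + s) ^ m) := by
          rw [show -1 * s = -s by ring, hC]; ring
      _ = C * (s ^ (a.re + 1 - 1) * Real.exp (-1 * s) * (1 + s) ^ m) := by
          rw [show s ^ (a.re - 1) * s = s ^ (a.re + 1 - 1) by
            rw [show a.re + 1 - 1 = (a.re - 1) + 1 by ring, Real.rpow_add hs0, Real.rpow_one]]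
  · -- bound integrable
    exact (keyInt m (by linarith) one_pos).const_mul C
  · -- h_diff
    filter_upwards [ae_restrict_mem measurableSet_Ioi] with s hs
    intro z hzb
    have hs0 : (0:ℝ) < s := hs
    have hzre : δ < z.re := ball_re hz₀' hzb
    have hzpos : 0 < z.re := lt_trans hδ hzre
    have hzne : z ≠ 0 := fun h => by simp [h] at hzpos
    have h1 : HasDerivAt (fun z : ℂ => (s:ℂ) * z⁻¹) ((s:ℂ) * -(z ^ 2)⁻¹) z :=
      (hasDerivAt_inv hzne).const_mul (s:ℂ)
    have h2 : HasDerivAt (fun z : ℂ => 1 + (s:ℂ) * z⁻¹) ((s:ℂ) * -(z ^ 2)⁻¹) z :=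
      h1.const_add 1
    have h3 := HasDerivAt.cpow_const (c := c) h2 (slit_one_add hzpos hs0.le)
    exact h3.const_mul (Complex.exp (-(s:ℂ)) * (s:ℂ) ^ (a - 1))

end UAux3

namespace UAux4
open Set MeasureTheory Filter Real
open UAux UAux2 UAux3

lemma real_case (a c : ℂ) (ha : 0 < a.re) {x : ℝ} (hx : 0 < x) :
    (∫ s in Ioi (0:ℝ), Complex.exp (-(s:ℂ)) * (s:ℂ) ^ (a - 1) * (1 + (s:ℂ) * ((x:ℂ))⁻¹) ^ c)
      = (x:ℂ) ^ a *
        ∫ t in Ioi (0:ℝ), Complex.exp (-(t:ℂ) * (x:ℂ)) * (t:ℂ) ^ (a - 1) * (1 + (t:ℂ)) ^ c := by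
  have hxc : (x:ℂ) ≠ 0 := Complex.ofReal_ne_zero.2 hx.ne'
  set g : ℝ → ℂ :=
    fun s => Complex.exp (-(s:ℂ)) * (s:ℂ) ^ (a - 1) * (1 + (s:ℂ) * ((x:ℂ))⁻¹) ^ c with hg
  have h := MeasureTheory.integral_comp_mul_left_Ioi g 0 hx
  rw [mul_zero] at h
  have h2 : ∫ s in Ioi (0:ℝ), g s = (x : ℝ) • ∫ t in Ioi (0:ℝ), g (x * t) := by
    rw [h, smul_inv_smul₀ hx.ne']
  have h3 : EqOn (fun t : ℝ => g (x * t))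
      (fun t : ℝ => (x:ℂ) ^ (a - 1) *
        (Complex.exp (-(t:ℂ) * (x:ℂ)) * (t:ℂ) ^ (a - 1) * (1 + (t:ℂ)) ^ c)) (Ioi 0) := by
    intro t ht
    have ht0 : (0:ℝ) < t := ht
    simp only [hg]
    have e1 : ((x * t : ℝ) : ℂ) = (x:ℂ) * (t:ℂ) := by push_cast; ring
    rw [e1]
    have e2 : ((x:ℂ) * (t:ℂ)) ^ (a - 1) = (x:ℂ) ^ (a - 1) * (t:ℂ) ^ (a - 1) :=
      Complex.mul_cpow_ofReal_nonneg hx.le ht0.le _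
    have e3 : (1 : ℂ) + (x:ℂ) * (t:ℂ) * ((x:ℂ))⁻¹ = 1 + (t:ℂ) := by
      field_simp
    have e4 : Complex.exp (-((x:ℂ) * (t:ℂ))) = Complex.exp (-(t:ℂ) * (x:ℂ)) := by
      ring_nf
    rw [e2, e3, e4]
    ring
  rw [h2, setIntegral_congr_fun measurableSet_Ioi h3, MeasureTheory.integral_const_mul,
    Complex.real_smul]
  rw [show (x:ℂ) * ((x:ℂ) ^ (a - 1) *
      ∫ t in Ioi (0:ℝ), Complex.exp (-(t:ℂ) * (x:ℂ)) * (t:ℂ) ^ (a - 1) * (1 + (t:ℂ)) ^ c)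
    = ((x:ℂ) ^ (1:ℂ) * (x:ℂ) ^ (a - 1)) *
      ∫ t in Ioi (0:ℝ), Complex.exp (-(t:ℂ) * (x:ℂ)) * (t:ℂ) ^ (a - 1) * (1 + (t:ℂ)) ^ c by
      rw [Complex.cpow_one]; ring]
  rw [← Complex.cpow_add _ _ hxc]
  norm_num

lemma key (a c z : ℂ) (ha : 0 < a.re) (hz : 0 < z.re) :
    z ^ a * (∫ t in Ioi (0:ℝ), Complex.exp (-(t:ℂ) * z) * (t:ℂ) ^ (a - 1) * (1 + (t:ℂ)) ^ c)
      = ∫ s in Ioi (0:ℝ), Complex.exp (-(s:ℂ)) * (s:ℂ) ^ (a - 1) * (1 + (s:ℂ) * z⁻¹) ^ c := by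
  set Uset : Set ℂ := {w : ℂ | 0 < w.re} with hUset
  have hopen : IsOpen Uset := isOpen_lt continuous_const Complex.continuous_re
  have hconn : IsPreconnected Uset := (convex_halfSpace_re_gt 0).isPreconnected
  set h : ℂ → ℂ := fun w =>
    w ^ a * (∫ t in Ioi (0:ℝ), Complex.exp (-(t:ℂ) * w) * (t:ℂ) ^ (a - 1) * (1 + (t:ℂ)) ^ c)
      - ∫ s in Ioi (0:ℝ), Complex.exp (-(s:ℂ)) * (s:ℂ) ^ (a - 1) * (1 + (s:ℂ) * w⁻¹) ^ c
    with hh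
  have hdiff : DifferentiableOn ℂ h Uset := by
    refine DifferentiableOn.sub (DifferentiableOn.mul ?_ (Fdiff a c ha)) (Gdiff a c ha)
    intro w hw
    exact (HasDerivAt.cpow_const (c := a) (hasDerivAt_id w)
      (Complex.mem_slitPlane_iff.2 (Or.inl hw))).differentiableAt.differentiableWithinAt
  have hanal := hdiff.analyticOnNhd hopen
  have h1U : (1:ℂ) ∈ Uset := by simp [hUset]
  have hfreq : ∃ᶠ w in nhdsWithin (1:ℂ) {w | w ≠ 1}, h w = 0 := by
    set u : ℕ → ℂ := fun n => ((1 + ((n:ℝ) + 1)⁻¹ : ℝ) : ℂ) with hu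
    have htend : Tendsto u atTop (nhdsWithin (1:ℂ) {w | w ≠ 1}) := by
      apply tendsto_nhdsWithin_of_tendsto_nhds_of_eventually_within
      · have hr : Tendsto (fun n : ℕ => 1 + ((n:ℝ) + 1)⁻¹) atTop (nhds 1) := by
          have := tendsto_one_div_add_atTop_nhds_zero_nat (𝕜 := ℝ)
          simp only [one_div] at this
          simpa using tendsto_const_nhds.add this
        have := (Complex.continuous_ofReal.tendsto (1:ℝ)).comp hr
        exact this
      · filter_upwards with n
        simp only [hu, mem_setOf_eq, ne_eq, Complex.ofReal_eq_one]
        have : (0:ℝ) < ((n:ℝ) + 1)⁻¹ := by positivity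
        intro hcon; linarith [hcon]
    refine htend.frequently ((Eventually.of_forall fun n => ?_).frequently)
    have hxpos : (0:ℝ) < 1 + ((n:ℝ) + 1)⁻¹ := by positivity
    simp only [hh, hu]
    rw [sub_eq_zero]
    exact (real_case a c ha hxpos).symm
  have heq := hanal.eqOn_zero_of_preconnected_of_frequently_eq_zero hconn h1U hfreq
  have hzU : z ∈ Uset := hz
  have := heq hzU
  simp only [hh, Pi.zero_apply] at this
  exact sub_eq_zero.1 this

end UAux4

open Set

/-- For all `a, b, z ∈ ℂ` with `Re a > 0` and `Re z > 0`,
`U(a,b,z) = z^{−a} (1/Γ(a)) ∫₀^∞ e^{−s} s^{a−1} (1 + s/z)^{b−a−1} ds`,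
where all complex powers are principal branches. -/
theorem U_eq_substituted (a b z : ℂ) (ha : 0 < a.re) (hz : 0 < z.re) :
    U a b z = z ^ (-a) *
      ((1 / Complex.Gamma a) *
        ∫ s in Set.Ioi (0 : ℝ),
          Complex.exp (-(s : ℂ)) * (s : ℂ) ^ (a - 1) * (1 + (s : ℂ) / z) ^ (b - a - 1)) := by
  have hzne : z ≠ 0 := fun h => by simp [h] at hz
  have hkey := UAux4.key a (b - a - 1) z ha hz
  have hmul : z ^ (-a) * z ^ a = 1 := by
    rw [← Complex.cpow_add _ _ hzne]; simp
  have habs : ∀ g F : ℂ, z ^ (-a) * (g * (z ^ a * F)) = g * F := by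
    intro g F
    rw [show z ^ (-a) * (g * (z ^ a * F)) = z ^ (-a) * z ^ a * (g * F) by ring, hmul, one_mul]
  unfold U
  simp only [div_eq_mul_inv]
  rw [← hkey, habs]
end

section
/- Let d ≥ 1 be an integer, σ > 0, κ₀ > 0, ω₀ ∈ ℝ, ε ≥ 0, and let Q : (0,∞) → ℂ be three times differentiable and satisfy the profile equation with parameters (κ₀, ω₀, ε, δ = 0). Define Y₂(ξ) = ξ Q'(ξ) + (1/σ + iω₀/κ₀) Q(ξ). Then the linearized operator 𝓛 satisfies 𝓛 Y₂ = 2κ₀ Y₂ on (0,∞), where 𝓛w = (i+ε)(w'' + ((d−1)/ξ)w') − κ₀(ξ w' + (1/σ)w) − iω₀ w + i(1+σ)|Q|^{2σ} w + iσ |Q|^{2σ−2} Q² w̄. -/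
open Set

/-- The left-hand side of the profile equation with parameters `d, σ, κ, ω, ε, δ`:
`(1−iε)(Q'' + ((d−1)/ξ)Q') + iκξQ' + i(κ/σ)Q − ωQ + (1+iδ)|Q|^{2σ}Q`. -/
noncomputable def profileExpr (d : ℕ) (σ κ ω ε δ : ℝ) (Q : ℝ → ℂ) (ξ : ℝ) : ℂ :=
  (1 - Complex.I * (ε : ℂ)) *
      (deriv (deriv Q) ξ + (((d : ℂ) - 1) / (ξ : ℂ)) * deriv Q ξ)
    + Complex.I * (κ : ℂ) * (ξ : ℂ) * deriv Q ξ
    + Complex.I * ((κ : ℂ) / (σ : ℂ)) * Q ξ - (ω : ℂ) * Q ξ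
    + (1 + Complex.I * (δ : ℂ)) * ((‖Q ξ‖ ^ (2 * σ) : ℝ) : ℂ) * Q ξ

/-- The linearization `𝓛` of the dynamically rescaled CGL equation along the solution
`(e^{iω₀τ}Q, κ₀)` (radial case, `δ = 0`):
`𝓛w = (i+ε)(w'' + ((d−1)/ξ)w') − κ₀(ξw' + w/σ) − iω₀w + i(1+σ)|Q|^{2σ}w
  + iσ|Q|^{2σ−2}Q²w̄`. -/
noncomputable def Lop (d : ℕ) (σ κ₀ ω₀ ε : ℝ) (Q w : ℝ → ℂ) (ξ : ℝ) : ℂ :=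
  (Complex.I + (ε : ℂ)) *
      (deriv (deriv w) ξ + (((d : ℂ) - 1) / (ξ : ℂ)) * deriv w ξ)
    - (κ₀ : ℂ) * ((ξ : ℂ) * deriv w ξ + (1 / (σ : ℂ)) * w ξ)
    - Complex.I * (ω₀ : ℂ) * w ξ
    + Complex.I * (1 + (σ : ℂ)) * ((‖Q ξ‖ ^ (2 * σ) : ℝ) : ℂ) * w ξ
    + Complex.I * (σ : ℂ) * ((‖Q ξ‖ ^ (2 * σ - 2) : ℝ) : ℂ) * (Q ξ) ^ 2 *
        (starRingEnd ℂ) (w ξ)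

open Complex in
lemma nl_conj (σ : ℝ) (hσ : 0 < σ) (q : ℂ) :
    ((‖q‖ ^ (2 * σ - 2) : ℝ) : ℂ) * q ^ 2 * (starRingEnd ℂ) q
      = ((‖q‖ ^ (2 * σ) : ℝ) : ℂ) * q := by
  rcases eq_or_ne q 0 with h | h
  · simp [h, Real.zero_rpow (by positivity : (2*σ) ≠ 0)]
  · have hr : 0 < ‖q‖ := norm_pos_iff.mpr h
    have h1 : (q : ℂ) * (starRingEnd ℂ) q = ((‖q‖ ^ (2:ℝ) : ℝ) : ℂ) := by
      rw [Complex.mul_conj]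
      norm_cast
      rw [Complex.normSq_eq_norm_sq, ← Real.rpow_natCast ‖q‖ 2]
    have h2 : (‖q‖ ^ (2 * σ - 2) : ℝ) * (‖q‖ ^ (2:ℝ) : ℝ)
        = ‖q‖ ^ (2 * σ) := by
      rw [← Real.rpow_add hr]; ring_nf
    calc ((‖q‖ ^ (2 * σ - 2) : ℝ) : ℂ) * q ^ 2 * (starRingEnd ℂ) q
        = ((‖q‖ ^ (2 * σ - 2) : ℝ) : ℂ) * (q * (starRingEnd ℂ) q) * q := by ring
      _ = ((‖q‖ ^ (2 * σ - 2) : ℝ) : ℂ) * ((‖q‖ ^ (2:ℝ) : ℝ) : ℂ) * q := by rw [h1]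
      _ = _ := by rw [← Complex.ofReal_mul, h2]

lemma abs_rpow_eq (τ : ℝ) (z : ℂ) :
    ‖z‖ ^ (2 * τ) = ((z.re ^ 2 + z.im ^ 2) ^ τ : ℝ) := by
  have h : z.re ^ 2 + z.im ^ 2 = ‖z‖ ^ (2:ℕ) := by
    rw [← Complex.normSq_eq_norm_sq, Complex.normSq_apply]; ring
  rw [h, ← Real.rpow_natCast ‖z‖ 2, ← Real.rpow_mul (norm_nonneg z)]
  norm_num


lemma hasDerivAt_nl (σ : ℝ) (hσ : 0 < σ) (Q : ℝ → ℂ) (ξ : ℝ) (hQ : DifferentiableAt ℝ Q ξ) :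
    HasDerivAt (fun x => ((‖Q x‖ ^ (2 * σ) : ℝ) : ℂ) * Q x)
      ((1 + (σ:ℂ)) * ((‖Q ξ‖ ^ (2 * σ) : ℝ) : ℂ) * deriv Q ξ
        + (σ:ℂ) * ((‖Q ξ‖ ^ (2 * σ - 2) : ℝ) : ℂ) * (Q ξ) ^ 2 *
          (starRingEnd ℂ) (deriv Q ξ)) ξ := by
  have hQ' := hQ.hasDerivAt
  rcases eq_or_ne (Q ξ) 0 with h0 | h0
  · have hval : (1 + (σ:ℂ)) * ((‖Q ξ‖ ^ (2 * σ) : ℝ) : ℂ) * deriv Q ξ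
        + (σ:ℂ) * ((‖Q ξ‖ ^ (2 * σ - 2) : ℝ) : ℂ) * (Q ξ) ^ 2 *
          (starRingEnd ℂ) (deriv Q ξ) = 0 := by
      simp [h0, Real.zero_rpow (by positivity : (2*σ) ≠ 0)]
    rw [hval, hasDerivAt_iff_tendsto_slope]
    have hev : slope (fun x => ((‖Q x‖ ^ (2 * σ) : ℝ) : ℂ) * Q x) ξ
        = fun x => ((‖Q x‖ ^ (2 * σ) : ℝ) : ℂ) * slope Q ξ x := by
      funext x
      simp only [slope_def_module, h0, sub_zero, Complex.real_smul,
        Complex.ofReal_zero, mul_zero, Real.zero_rpow (by positivity : (2*σ) ≠ 0)]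
      ring
    rw [hev]
    have h1 : Filter.Tendsto (fun x => ((‖Q x‖ ^ (2 * σ) : ℝ) : ℂ))
        (nhdsWithin ξ {ξ}ᶜ) (nhds 0) := by
      have hc : ContinuousAt (fun x => ‖Q x‖ ^ (2 * σ)) ξ := by
        have h1 : ContinuousAt (fun x => ‖Q x‖) ξ :=
          continuous_norm.continuousAt.comp hQ.continuousAt
        simpa [Function.comp_def] using
          ContinuousAt.comp (x := ξ) (g := fun y : ℝ => y ^ (2*σ))
            (Real.continuousAt_rpow_const _ _ (Or.inr (by positivity))) h1
      have hc2 : ContinuousAt (fun x => ((‖Q x‖ ^ (2 * σ) : ℝ) : ℂ)) ξ :=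
        Complex.continuous_ofReal.continuousAt.comp hc
      have := hc2.continuousWithinAt (s := {ξ}ᶜ)
      simpa [h0, Real.zero_rpow (by positivity : (2*σ) ≠ 0)] using this.tendsto
    have h2 : Filter.Tendsto (slope Q ξ) (nhdsWithin ξ {ξ}ᶜ) (nhds (deriv Q ξ)) :=
      (hasDerivAt_iff_tendsto_slope).mp hQ'
    simpa using h1.mul h2
  · -- chain rule case
    have hre : HasDerivAt (fun x => (Q x).re) (deriv Q ξ).re ξ := by
      simpa [Function.comp_def] using Complex.reCLM.hasFDerivAt.comp_hasDerivAt ξ hQ'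
    have him : HasDerivAt (fun x => (Q x).im) (deriv Q ξ).im ξ := by
      simpa [Function.comp_def] using Complex.imCLM.hasFDerivAt.comp_hasDerivAt ξ hQ'
    have hg : HasDerivAt (fun x => (Q x).re ^ 2 + (Q x).im ^ 2)
        (2 * (Q ξ).re * (deriv Q ξ).re + 2 * (Q ξ).im * (deriv Q ξ).im) ξ := by
      have := (hre.pow 2).add (him.pow 2)
      refine this.congr_deriv ?_
      push_cast; ring
    have hg0 : (Q ξ).re ^ 2 + (Q ξ).im ^ 2 ≠ 0 := by
      have := Complex.normSq_pos.mpr h0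
      rw [Complex.normSq_apply] at this
      nlinarith [this]
    have hcomp : HasDerivAt (fun x => ((Q x).re ^ 2 + (Q x).im ^ 2) ^ σ)
        (σ * ((Q ξ).re ^ 2 + (Q ξ).im ^ 2) ^ (σ - 1) *
          (2 * (Q ξ).re * (deriv Q ξ).re + 2 * (Q ξ).im * (deriv Q ξ).im)) ξ := by
      simpa [Function.comp_def] using (Real.hasDerivAt_rpow_const (p := σ) (Or.inl hg0)).comp ξ hg
    have hmul := hcomp.ofReal_comp.mul hQ'
    have hfun : (fun x => (((((Q x).re ^ 2 + (Q x).im ^ 2) ^ σ : ℝ)) : ℂ) * Q x)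
        = fun x => ((‖Q x‖ ^ (2 * σ) : ℝ) : ℂ) * Q x := by
      funext x; rw [abs_rpow_eq]
    rw [← hfun]
    refine hmul.congr_deriv (Eq.symm ?_)
    -- now pure algebra on the derivative value
    rw [abs_rpow_eq σ (Q ξ), show 2 * σ - 2 = 2 * (σ - 1) by ring, abs_rpow_eq (σ-1) (Q ξ)]
    set g : ℝ := (Q ξ).re ^ 2 + (Q ξ).im ^ 2 with hgdef
    have hs2 : ((2 * (Q ξ).re * (deriv Q ξ).re + 2 * (Q ξ).im * (deriv Q ξ).im : ℝ) : ℂ)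
        = (starRingEnd ℂ) (Q ξ) * deriv Q ξ + Q ξ * (starRingEnd ℂ) (deriv Q ξ) := by
      apply Complex.ext <;>
        simp [Complex.add_re, Complex.add_im, Complex.mul_re, Complex.mul_im] <;> ring
    have hA : ((g ^ σ : ℝ) : ℂ) = ((g ^ (σ-1) : ℝ) : ℂ) * (Q ξ * (starRingEnd ℂ) (Q ξ)) := by
      rw [Complex.mul_conj, show (Complex.normSq (Q ξ) : ℝ) = g by
        rw [Complex.normSq_apply, hgdef]; ring, ← Complex.ofReal_mul]
      congr 1
      rw [show σ = (σ - 1) + 1 by ring, Real.rpow_add_one hg0]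
      ring_nf
    rw [Complex.ofReal_mul, Complex.ofReal_mul, hs2]
    linear_combination ((σ:ℂ) * deriv Q ξ) * hA

set_option maxHeartbeats 4000000 in
/-- The scaling symmetry eigenfunction: if `Q` solves the profile equation with `δ = 0`
and `Y₂(ξ) = ξQ'(ξ) + (1/σ + iω₀/κ₀)Q(ξ)`, then `𝓛Y₂ = 2κ₀Y₂` on `(0,∞)`. -/
theorem Lop_eigen_two_kappa (d : ℕ) (hd : 1 ≤ d) (σ κ₀ ω₀ ε : ℝ)
    (hσ : 0 < σ) (hκ : 0 < κ₀) (hε : 0 ≤ ε) (Q : ℝ → ℂ)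
    (hQdiff : ∀ ξ : ℝ, 0 < ξ → DifferentiableAt ℝ Q ξ ∧ DifferentiableAt ℝ (deriv Q) ξ ∧
      DifferentiableAt ℝ (deriv (deriv Q)) ξ)
    (hQ : ∀ ξ : ℝ, 0 < ξ → profileExpr d σ κ₀ ω₀ ε 0 Q ξ = 0)
    (Y₂ : ℝ → ℂ)
    (hY₂ : ∀ ξ : ℝ, Y₂ ξ = (ξ : ℂ) * deriv Q ξ +
      (1 / (σ : ℂ) + Complex.I * (ω₀ : ℂ) / (κ₀ : ℂ)) * Q ξ) :
    ∀ ξ : ℝ, 0 < ξ → Lop d σ κ₀ ω₀ ε Q Y₂ ξ = 2 * (κ₀ : ℂ) * Y₂ ξ := by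
  intro ξ hξ
  obtain ⟨hQ1, hQ2, hQ3⟩ := hQdiff ξ hξ
  have hxC : ((ξ:ℝ):ℂ) ≠ 0 := by exact_mod_cast hξ.ne'
  have hsC : ((σ:ℝ):ℂ) ≠ 0 := by exact_mod_cast hσ.ne'
  have hkC : ((κ₀:ℝ):ℂ) ≠ 0 := by exact_mod_cast hκ.ne'
  set c : ℂ := 1 / (σ : ℂ) + Complex.I * (ω₀ : ℂ) / (κ₀ : ℂ) with hcdef
  have hY2fun : Y₂ = fun x : ℝ => (x : ℂ) * deriv Q x + c * Q x := funext hY₂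
  -- HasDerivAt of x ↦ (x : ℂ)
  have hco : ∀ x : ℝ, HasDerivAt (fun y : ℝ => (y : ℂ)) 1 x := fun x => by
    exact Complex.ofRealCLM.hasDerivAt (x := x)
  -- first derivative of Y₂ at any point of (0,∞)
  have hY2d : ∀ x : ℝ, 0 < x → HasDerivAt Y₂
      (deriv Q x + (x : ℂ) * deriv (deriv Q) x + c * deriv Q x) x := by
    intro x hx
    obtain ⟨k1, k2, k3⟩ := hQdiff x hx
    rw [hY2fun]
    have := ((hco x).mul k2.hasDerivAt).add (k1.hasDerivAt.const_mul c)
    refine this.congr_deriv ?_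
    ring
  have hdY2 : ∀ x ∈ Ioi (0:ℝ), deriv Y₂ x
      = deriv Q x + (x : ℂ) * deriv (deriv Q) x + c * deriv Q x :=
    fun x hx => (hY2d x hx).deriv
  -- second derivative of Y₂ at ξ
  have hG : HasDerivAt (fun x : ℝ => deriv Q x + (x : ℂ) * deriv (deriv Q) x + c * deriv Q x)
      (deriv (deriv Q) ξ + ((deriv (deriv Q) ξ + (ξ:ℂ) * deriv (deriv (deriv Q)) ξ)
        + c * deriv (deriv Q) ξ)) ξ := by
    have := (hQ2.hasDerivAt.add ((hco ξ).mul hQ3.hasDerivAt)).add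
      (hQ2.hasDerivAt.const_mul c)
    refine this.congr_deriv ?_
    ring
  have hY2dd : HasDerivAt (deriv Y₂)
      (deriv (deriv Q) ξ + ((deriv (deriv Q) ξ + (ξ:ℂ) * deriv (deriv (deriv Q)) ξ)
        + c * deriv (deriv Q) ξ)) ξ := by
    apply hG.congr_of_eventuallyEq
    filter_upwards [Ioi_mem_nhds hξ] with x hx
    exact hdY2 x hx
  -- the profile equation in the form F = E on (0,∞)
  set E : ℝ → ℂ := fun x =>
    (ω₀ : ℂ) * Q x - Complex.I * (κ₀ : ℂ) * ((x : ℂ) * deriv Q x)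
      - Complex.I * ((κ₀ : ℂ) / (σ : ℂ)) * Q x
      - (1 - Complex.I * (ε : ℂ)) *
          (deriv (deriv Q) x + (((d : ℂ) - 1) * ((x : ℂ))⁻¹) * deriv Q x) with hEdef
  have hFE : ∀ x ∈ Ioi (0:ℝ), ((‖Q x‖ ^ (2 * σ) : ℝ) : ℂ) * Q x = E x := by
    intro x hx
    have h := hQ x hx
    simp only [profileExpr, Complex.ofReal_zero, mul_zero, add_zero, one_mul] at h
    rw [hEdef]
    linear_combination h
  have hE : HasDerivAt E
      ((ω₀ : ℂ) * deriv Q ξ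
        - Complex.I * (κ₀ : ℂ) * (deriv Q ξ + (ξ : ℂ) * deriv (deriv Q) ξ)
        - Complex.I * ((κ₀ : ℂ) / (σ : ℂ)) * deriv Q ξ
        - (1 - Complex.I * (ε : ℂ)) *
            (deriv (deriv (deriv Q)) ξ
              + (((d : ℂ) - 1) * ((ξ : ℂ))⁻¹) * deriv (deriv Q) ξ
              - (((d : ℂ) - 1) * (((ξ : ℂ))^2)⁻¹) * deriv Q ξ)) ξ := by
    rw [hEdef]
    have h1 := hQ1.hasDerivAt
    have h2 := hQ2.hasDerivAt
    have h3 := hQ3.hasDerivAt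
    have hinv : HasDerivAt (fun x : ℝ => ((x : ℂ))⁻¹) (-1 / ((ξ:ℂ))^2) ξ := by
      have := (hasDerivAt_inv hxC).comp_ofReal
      convert this using 1
      field_simp
    have := ((h1.const_mul ((ω₀:ℝ):ℂ)).sub
        (((hco ξ).mul h2).const_mul (Complex.I * (κ₀ : ℂ)))).sub
        (h1.const_mul (Complex.I * ((κ₀ : ℂ) / (σ : ℂ)))) |>.sub
        ((h3.add (((hinv.const_mul (((d:ℂ) - 1))).mul h2))).const_mul
          (1 - Complex.I * (ε : ℂ)))
    refine this.congr_deriv ?_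
    ring
  have hPp : (1 + (σ:ℂ)) * ((‖Q ξ‖ ^ (2 * σ) : ℝ) : ℂ) * deriv Q ξ
        + (σ:ℂ) * ((‖Q ξ‖ ^ (2 * σ - 2) : ℝ) : ℂ) * (Q ξ) ^ 2 *
          (starRingEnd ℂ) (deriv Q ξ)
      = (ω₀ : ℂ) * deriv Q ξ
        - Complex.I * (κ₀ : ℂ) * (deriv Q ξ + (ξ : ℂ) * deriv (deriv Q) ξ)
        - Complex.I * ((κ₀ : ℂ) / (σ : ℂ)) * deriv Q ξ
        - (1 - Complex.I * (ε : ℂ)) *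
            (deriv (deriv (deriv Q)) ξ
              + (((d : ℂ) - 1) * ((ξ : ℂ))⁻¹) * deriv (deriv Q) ξ
              - (((d : ℂ) - 1) * (((ξ : ℂ))^2)⁻¹) * deriv Q ξ) := by
    have hEF : HasDerivAt E ((1 + (σ:ℂ)) * ((‖Q ξ‖ ^ (2 * σ) : ℝ) : ℂ) * deriv Q ξ
        + (σ:ℂ) * ((‖Q ξ‖ ^ (2 * σ - 2) : ℝ) : ℂ) * (Q ξ) ^ 2 *
          (starRingEnd ℂ) (deriv Q ξ)) ξ :=
      (hasDerivAt_nl σ hσ Q ξ hQ1).congr_of_eventuallyEq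
        (by filter_upwards [Ioi_mem_nhds hξ] with x hx; exact (hFE x hx).symm)
    exact hEF.unique hE
  have hP := hQ ξ hξ
  simp only [profileExpr, Complex.ofReal_zero, mul_zero, add_zero, one_mul] at hP
  have hR := nl_conj σ hσ (Q ξ)
  have hconj : (starRingEnd ℂ) (Y₂ ξ)
      = (ξ : ℂ) * (starRingEnd ℂ) (deriv Q ξ)
        + (1 / (σ : ℂ) - Complex.I * (ω₀ : ℂ) / (κ₀ : ℂ)) * (starRingEnd ℂ) (Q ξ) := by
    rw [hY₂ ξ, hcdef]
    simp only [map_add, map_mul, map_div₀, map_one, map_ofNat, Complex.conj_ofReal,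
      Complex.conj_I]
    ring
  simp only [Lop]
  rw [hY2dd.deriv, (hY2d ξ hξ).deriv, hconj, hY₂ ξ]
  rw [hcdef]
  have hu : (ξ:ℂ) * ((ξ:ℂ))⁻¹ = 1 := mul_inv_cancel₀ hxC
  have hv : (σ:ℂ) * ((σ:ℂ))⁻¹ = 1 := mul_inv_cancel₀ hsC
  have ht : (κ₀:ℂ) * ((κ₀:ℂ))⁻¹ = 1 := mul_inv_cancel₀ hkC
  have hI : Complex.I * Complex.I = -1 := Complex.I_mul_I
  set x : ℂ := (ξ:ℂ)
  set s : ℂ := (σ:ℂ)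
  set k : ℂ := (κ₀:ℂ)
  set w : ℂ := (ω₀:ℂ)
  set e : ℂ := (ε:ℂ)
  set m : ℂ := (d:ℂ) - 1
  set q : ℂ := Q ξ
  set q1 : ℂ := deriv Q ξ
  set q2 : ℂ := deriv (deriv Q) ξ
  set q3 : ℂ := deriv (deriv (deriv Q)) ξ
  set cq : ℂ := (starRingEnd ℂ) (Q ξ)
  set cq1 : ℂ := (starRingEnd ℂ) (deriv Q ξ)
  set A' : ℂ := ((‖Q ξ‖ ^ (2 * σ) : ℝ) : ℂ)
  linear_combination
    (2*e*q2 + e*q2*s⁻¹ + (-2)*k*q*s⁻¹ + (-1)*k*q*s⁻¹^2 + x*e*q3 + (-3)*x*k*q1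
      + (-2)*x*k*q1*s⁻¹ + (-1)*x^2*k*q2 + 2*m*e*q1*x⁻¹ + m*e*q1*x⁻¹*s⁻¹
      + m*x*e*q2*x⁻¹ + (-1)*m*x*e*q1*x⁻¹^2 + Complex.I*w*e*q2*k⁻¹
      + (-1)*Complex.I*k*w*q*s⁻¹*k⁻¹ + (-1)*Complex.I*x*k*w*q1*k⁻¹
      + Complex.I*m*w*e*q1*x⁻¹*k⁻¹) * hI
    + (Complex.I * x) * hPp
    + (Complex.I * (2 + (1/s + Complex.I*w/k))) * hP
    + (Complex.I * s * (1/s - Complex.I*w/k)) * hR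
    + (Complex.I * m * q1 * x⁻¹ + m * e * q1 * x⁻¹) * hu
    + (2 * Complex.I * A' * q) * hv
    + (-2 * Complex.I * w * q) * ht
end
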